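/- arXiv:2309.00190 — 5 statements merged into one kernel-verified Lean document; each statement's English description precedes it below -/
import Mathlib

section
/- Let D be a bipartite graph with finite nonempty parts S and T, and suppose for every Ω ⊆ S the uniform measures satisfy π_S(Ω) ≤ π_T(N(Ω)) + ε for some ε ∈ [0,1]. Then there exists a coupling (X,Y), i.e. a joint probability distribution on S × T with uniform marginals on S and T, such that P(XY ∉ D) ≤ ε. -/
open Finset

set_option maxHeartbeats 2000000 in
theorem stmt1 {α β : Type*} [DecidableEq α] [DecidableEq β]
    (S : Finset α) (T : Finset β) (D : Finset (α × β))
    (hS : S.Nonempty) (hT : T.Nonempty) (hD : D ⊆ S ×ˢ T)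
    (ε : ℝ) (hε0 : 0 ≤ ε) (hε1 : ε ≤ 1)
    (hHall : ∀ Ω : Finset α, Ω ⊆ S →
      (Ω.card : ℝ) / S.card ≤
        ((T.filter (fun y => ∃ x ∈ Ω, (x, y) ∈ D)).card : ℝ) / T.card + ε) :
    ∃ μ : α × β → ℝ,
      (∀ p, 0 ≤ μ p) ∧
      (∀ p, p ∉ S ×ˢ T → μ p = 0) ∧
      (∀ x ∈ S, ∑ y ∈ T, μ (x, y) = 1 / S.card) ∧
      (∀ y ∈ T, ∑ x ∈ S, μ (x, y) = 1 / T.card) ∧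
      ∑ p ∈ (S ×ˢ T) \ D, μ p ≤ ε := by
  classical
  obtain ⟨y₀, hy₀⟩ := hT
  have hm0 : 0 < S.card := card_pos.mpr hS
  have hn0 : 0 < T.card := card_pos.mpr ⟨y₀, hy₀⟩
  set m := S.card with hm
  set n := T.card with hn
  set N := m * n with hNdef
  have hN0 : 0 < N := Nat.mul_pos hm0 hn0
  have hNr : (0:ℝ) < N := by exact_mod_cast hN0
  have hmr : (0:ℝ) < m := by exact_mod_cast hm0
  have hnr : (0:ℝ) < n := by exact_mod_cast hn0
  set d : ℕ := ⌊ε * N⌋₊ with hd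
  have hdle : (d:ℝ) ≤ ε * N := Nat.floor_le (by positivity)
  -- key integer Hall inequality
  have key : ∀ Ω : Finset α, Ω ⊆ S →
      n * Ω.card ≤ m * (T.filter (fun y => ∃ x ∈ Ω, (x, y) ∈ D)).card + d := by
    intro Ω hΩ
    have h1 := hHall Ω hΩ
    set K := (T.filter (fun y => ∃ x ∈ Ω, (x, y) ∈ D)).card with hK
    have hreal : (n:ℝ) * Ω.card ≤ m * K + ε * N := by
      have h2 : (Ω.card:ℝ)/m * (m*n) ≤ ((K:ℝ)/n + ε) * (m*n) :=
        mul_le_mul_of_nonneg_right h1 (by positivity)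
      have e1 : (Ω.card:ℝ)/m * (m*n) = n * Ω.card := by field_simp
      have e2 : ((K:ℝ)/n + ε) * (m*n) = m*K + ε*(m*n) := by field_simp
      have e3 : ((N:ℕ):ℝ) = (m:ℝ)*n := by rw [hNdef]; push_cast; ring
      rw [e1, e2] at h2
      rw [e3]; linarith
    have hlt : ((n * Ω.card : ℕ):ℝ) < ((m * K + d + 1 : ℕ):ℝ) := by
      have hflt : ε * N < d + 1 := Nat.lt_floor_add_one _
      push_cast
      push_cast at hreal
      linarith
    have h5 : n * Ω.card < m * K + d + 1 := by exact_mod_cast hlt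
    omega
  -- Hall's theorem on the blown-up graph
  set nbr : α → Finset (β × ℕ) := fun x =>
    ((T.filter (fun y => (x, y) ∈ D)) ×ˢ Finset.range m) ∪
      (Finset.range d).image (fun i => (y₀, m + i)) with hnbr
  have hall : ∀ s : Finset {p : α × ℕ // p ∈ S ×ˢ Finset.range n},
      s.card ≤ (s.biUnion (fun p => nbr p.1.1)).card := by
    intro s
    rcases s.eq_empty_or_nonempty with rfl | hs
    · simp
    set Ω := s.image (fun p => p.1.1) with hΩdef
    have hΩS : Ω ⊆ S := by
      intro x hx
      rw [hΩdef, mem_image] at hx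
      obtain ⟨p, _, rfl⟩ := hx
      exact (mem_product.mp p.2).1
    have h1 : s.card ≤ Ω.card * n := by
      calc s.card = (s.image Subtype.val).card :=
            (card_image_of_injective _ Subtype.val_injective).symm
        _ ≤ (Ω ×ˢ Finset.range n).card := by
            apply card_le_card
            intro p hp
            rw [mem_image] at hp
            obtain ⟨q, hq, rfl⟩ := hp
            rw [mem_product]
            exact ⟨mem_image.mpr ⟨q, hq, rfl⟩, (mem_product.mp q.2).2⟩
        _ = Ω.card * n := by rw [card_product, card_range]
    have hdisj : Disjoint ((T.filter (fun y => ∃ x ∈ Ω, (x, y) ∈ D)) ×ˢ Finset.range m)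
        ((Finset.range d).image (fun i => (y₀, m + i))) := by
      rw [disjoint_left]
      intro q hq hq'
      rw [mem_image] at hq'
      obtain ⟨i, _, rfl⟩ := hq'
      have := (mem_product.mp hq).2
      rw [mem_range] at this
      omega
    have h2 : (T.filter (fun y => ∃ x ∈ Ω, (x, y) ∈ D)) ×ˢ Finset.range m ∪
        (Finset.range d).image (fun i => (y₀, m + i)) ⊆
        s.biUnion (fun p => nbr p.1.1) := by
      intro q hq
      rcases mem_union.mp hq with hq | hq
      · rw [mem_product] at hq
        obtain ⟨hq1, hq2⟩ := hq
        rw [mem_filter] at hq1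
        obtain ⟨hqT, x, hxΩ, hxD⟩ := hq1
        rw [hΩdef, mem_image] at hxΩ
        obtain ⟨p, hp, rfl⟩ := hxΩ
        refine mem_biUnion.mpr ⟨p, hp, ?_⟩
        rw [hnbr]
        exact mem_union_left _ (mem_product.mpr ⟨mem_filter.mpr ⟨hqT, hxD⟩, hq2⟩)
      · obtain ⟨p, hp⟩ := hs
        refine mem_biUnion.mpr ⟨p, hp, ?_⟩
        rw [hnbr]
        exact mem_union_right _ hq
    have hinj : Function.Injective (fun i => (y₀, m + i) : ℕ → β × ℕ) := by
      intro i j h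
      simpa using h
    have h3 : m * (T.filter (fun y => ∃ x ∈ Ω, (x, y) ∈ D)).card + d ≤
        (s.biUnion (fun p => nbr p.1.1)).card := by
      have h4 := card_le_card h2
      rw [card_union_of_disjoint hdisj, card_product, card_range,
        card_image_of_injective _ hinj, card_range] at h4
      rw [Nat.mul_comm] at h4
      exact h4
    calc s.card ≤ Ω.card * n := h1
      _ = n * Ω.card := Nat.mul_comm _ _
      _ ≤ _ := key Ω hΩS
      _ ≤ _ := h3
  obtain ⟨f, hfinj, hfmem⟩ :=
    (Finset.all_card_le_biUnion_card_iff_exists_injective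
      (fun p : {p : α × ℕ // p ∈ S ×ˢ Finset.range n} => nbr p.1.1)).mp hall
  set g : α × ℕ → β × ℕ := fun p =>
    if h : p ∈ S ×ˢ Finset.range n then f ⟨p, h⟩ else (y₀, 0) with hgdef
  have hg_mem : ∀ p, p ∈ S ×ˢ Finset.range n → g p ∈ nbr p.1 := by
    intro p hp
    simp only [hgdef, dif_pos hp]
    exact hfmem ⟨p, hp⟩
  have hg_inj : ∀ p ∈ S ×ˢ Finset.range n, ∀ q ∈ S ×ˢ Finset.range n,
      g p = g q → p = q := by
    intro p hp q hq h
    simp only [hgdef, dif_pos hp, dif_pos hq] at h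
    exact congrArg Subtype.val (hfinj h)
  set c : α → β → ℕ := fun x y =>
    ((Finset.range n).filter (fun i => (g (x,i)).1 = y ∧ (g (x,i)).2 < m)).card with hc
  -- (A) row sums
  have rowc : ∀ x, ∑ y ∈ T, c x y ≤ n := by
    intro x
    rw [hc]
    rw [← card_biUnion]
    · calc _ ≤ (Finset.range n).card := card_le_card (by
          intro i hi
          rw [mem_biUnion] at hi
          obtain ⟨y, _, hi⟩ := hi
          exact mem_of_mem_filter _ hi)
        _ = n := card_range n
    · intro y _ y' _ hyy'
      rw [Function.onFun, disjoint_left]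
      intro i hi hi'
      rw [mem_filter] at hi hi'
      exact hyy' (hi.2.1 ▸ hi'.2.1)
  -- (B) column sums
  have colc : ∀ y, ∑ x ∈ S, c x y ≤ m := by
    intro y
    have e1 : ∑ x ∈ S, c x y =
        ((S ×ˢ Finset.range n).filter (fun p => (g p).1 = y ∧ (g p).2 < m)).card := by
      rw [card_filter, Finset.sum_product]
      simp only [hc, card_filter]
    rw [e1]
    calc _ ≤ (Finset.range m).card := by
          apply card_le_card_of_injOn (fun p => (g p).2)
          · intro p hp
            rw [mem_coe, mem_filter] at hp
            exact mem_range.mpr hp.2.2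
          · intro p hp q hq h
            rw [mem_coe, mem_filter] at hp hq
            apply hg_inj p hp.1 q hq.1
            exact Prod.ext (hp.2.1.trans hq.2.1.symm) h
      _ = m := card_range m
  -- (C) support in D
  have suppc : ∀ x ∈ S, ∀ y, (x, y) ∉ D → c x y = 0 := by
    intro x hx y hxy
    rw [hc, card_eq_zero, filter_eq_empty_iff]
    rintro i hi ⟨h1, h2⟩
    have hp : (x, i) ∈ S ×ˢ Finset.range n := mem_product.mpr ⟨hx, hi⟩
    have := hg_mem (x, i) hp
    rw [hnbr] at this
    rcases mem_union.mp this with h | h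
    · rw [mem_product, mem_filter] at h
      exact hxy (h1 ▸ h.1.2)
    · rw [mem_image] at h
      obtain ⟨j, _, hj⟩ := h
      have : (g (x, i)).2 = m + j := by rw [← hj]
      omega
  -- (D) total mass
  have total : N ≤ (∑ x ∈ S, ∑ y ∈ T, c x y) + d := by
    have e1 : ∑ x ∈ S, ∑ y ∈ T, c x y =
        ((S ×ˢ Finset.range n).filter (fun p => (g p).1 ∈ T ∧ (g p).2 < m)).card := by
      calc ∑ x ∈ S, ∑ y ∈ T, c x y
          = ∑ x ∈ S, ∑ y ∈ T, ∑ i ∈ Finset.range n,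
              (if (g (x,i)).1 = y ∧ (g (x,i)).2 < m then 1 else 0) := by
            simp only [hc, card_filter]
        _ = ∑ x ∈ S, ∑ i ∈ Finset.range n, ∑ y ∈ T,
              (if (g (x,i)).1 = y ∧ (g (x,i)).2 < m then 1 else 0) :=
            Finset.sum_congr rfl fun x _ => Finset.sum_comm
        _ = ∑ x ∈ S, ∑ i ∈ Finset.range n,
              (if (g (x,i)).1 ∈ T ∧ (g (x,i)).2 < m then 1 else 0) := by
            refine Finset.sum_congr rfl fun x _ => Finset.sum_congr rfl fun i _ => ?_
            by_cases hq : (g (x, i)).2 < m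
            · simp only [hq, and_true]
              rw [Finset.sum_ite_eq T ((g (x,i)).1) (fun _ => 1)]
            · simp [hq]
        _ = ∑ p ∈ S ×ˢ Finset.range n,
              (if (g p).1 ∈ T ∧ (g p).2 < m then 1 else 0) :=
            by rw [Finset.sum_product]
        _ = _ := (card_filter _ _).symm
    have e2 : ((S ×ˢ Finset.range n).filter (fun p => ¬((g p).1 ∈ T ∧ (g p).2 < m))).card ≤ d := by
      calc _ ≤ ((Finset.range d).image (fun i => (y₀, m + i))).card := by
            apply card_le_card_of_injOn g
            · intro p hp
              rw [mem_coe, mem_filter] at hp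
              have := hg_mem p hp.1
              rw [hnbr] at this
              rcases mem_union.mp this with h | h
              · exfalso
                rw [mem_product, mem_filter, mem_range] at h
                exact hp.2 ⟨h.1.1, h.2⟩
              · exact h
            · intro p hp q hq h
              rw [mem_coe, mem_filter] at hp hq
              exact hg_inj p hp.1 q hq.1 h
        _ ≤ (Finset.range d).card := card_image_le
        _ = d := card_range d
    have e3 : ((S ×ˢ Finset.range n).filter (fun p => (g p).1 ∈ T ∧ (g p).2 < m)).card +
        ((S ×ˢ Finset.range n).filter (fun p => ¬((g p).1 ∈ T ∧ (g p).2 < m))).card =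
        (S ×ˢ Finset.range n).card := card_filter_add_card_filter_not _
    have e4 : (S ×ˢ Finset.range n).card = N := by
      rw [card_product, card_range, hNdef]
    omega
  clear_value nbr g c
  clear hnbr hgdef hc hg_mem hg_inj hfinj hfmem f hall key hHall hD
  -- real completion
  set a : α → ℝ := fun x => 1/m - (∑ y ∈ T, c x y)/N with hadef
  set b : β → ℝ := fun y => 1/n - (∑ x ∈ S, c x y)/N with hbdef
  set Δ : ℝ := 1 - (∑ x ∈ S, ∑ y ∈ T, c x y)/N with hΔdef
  have hm' : (m:ℝ) ≠ 0 := ne_of_gt hmr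
  have hn' : (n:ℝ) ≠ 0 := ne_of_gt hnr
  have hcastN : ((N:ℕ):ℝ) = (m:ℝ) * n := by rw [hNdef]; push_cast; ring
  have hnN : (n:ℝ)/N = 1/m := by
    rw [hcastN, div_eq_div_iff (mul_ne_zero hm' hn') hm']
    ring
  have hmN : (m:ℝ)/N = 1/n := by
    rw [hcastN, div_eq_div_iff (mul_ne_zero hm' hn') hn']
    ring
  have ha0 : ∀ x, 0 ≤ a x := by
    intro x
    have h1 : ((∑ y ∈ T, c x y : ℕ):ℝ)/N ≤ (n:ℝ)/N := by
      apply (div_le_div_iff_of_pos_right hNr).mpr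
      exact_mod_cast rowc x
    rw [hnN] at h1
    simp only [hadef]
    linarith
  have hb0 : ∀ y, 0 ≤ b y := by
    intro y
    have h1 : ((∑ x ∈ S, c x y : ℕ):ℝ)/N ≤ (m:ℝ)/N := by
      apply (div_le_div_iff_of_pos_right hNr).mpr
      exact_mod_cast colc y
    rw [hmN] at h1
    simp only [hbdef]
    linarith
  have hsa : ∑ x ∈ S, a x = Δ := by
    simp only [hadef, hΔdef, Finset.sum_sub_distrib, ← Finset.sum_div,
      Finset.sum_const, ← hm, nsmul_eq_mul]
    push_cast
    rw [mul_one, div_self hm']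
  have hsb : ∑ y ∈ T, b y = Δ := by
    simp only [hbdef, hΔdef, Finset.sum_sub_distrib, ← Finset.sum_div,
      Finset.sum_const, ← hn, nsmul_eq_mul]
    rw [Finset.sum_comm]
    push_cast
    rw [mul_one, div_self hn']
  have hΔ0 : 0 ≤ Δ := hsa ▸ Finset.sum_nonneg (fun x _ => ha0 x)
  have hΔε : Δ ≤ ε := by
    have h1 : ((N:ℕ):ℝ) ≤ ((∑ x ∈ S, ∑ y ∈ T, c x y) : ℕ) + (d:ℝ) := by
      exact_mod_cast total
    have h2 : (1 - ε) * N ≤ ((∑ x ∈ S, ∑ y ∈ T, c x y : ℕ) : ℝ) := by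
      linarith
    have h3 : 1 - ε ≤ ((∑ x ∈ S, ∑ y ∈ T, c x y : ℕ) : ℝ) / N :=
      (le_div_iff₀ hNr).mpr h2
    rw [hΔdef]
    push_cast at h3 ⊢
    linarith
  -- a x = 0 when Δ = 0 (and symmetrically)
  have haΔ : ∀ x ∈ S, Δ = 0 → a x = 0 := by
    intro x hx h0
    refine le_antisymm ?_ (ha0 x)
    have := Finset.single_le_sum (f := a) (fun x _ => ha0 x) hx
    rw [hsa, h0] at this
    exact this
  have hbΔ : ∀ y ∈ T, Δ = 0 → b y = 0 := by
    intro y hy h0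
    refine le_antisymm ?_ (hb0 y)
    have := Finset.single_le_sum (f := b) (fun y _ => hb0 y) hy
    rw [hsb, h0] at this
    exact this
  -- the coupling
  refine ⟨fun p => if p ∈ S ×ˢ T then (c p.1 p.2)/N + a p.1 * b p.2 / Δ else 0,
    ?_, ?_, ?_, ?_, ?_⟩
  · intro p
    dsimp only
    split_ifs with h
    · have h1 : (0:ℝ) ≤ ((c p.1 p.2 : ℕ):ℝ)/N := by positivity
      have h2 : (0:ℝ) ≤ a p.1 * b p.2 / Δ :=
        div_nonneg (mul_nonneg (ha0 p.1) (hb0 p.2)) hΔ0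
      linarith
    · exact le_refl 0
  · intro p hp
    exact if_neg hp
  · intro x hx
    have e : ∑ y ∈ T, (if (x, y) ∈ S ×ˢ T then (c x y)/(N:ℝ) + a x * b y / Δ else 0)
        = (∑ y ∈ T, ((c x y : ℕ):ℝ))/N + a x * Δ / Δ := by
      rw [Finset.sum_congr rfl
        (fun y hy => if_pos (mem_product.mpr ⟨hx, hy⟩)),
        Finset.sum_add_distrib, ← Finset.sum_div, ← Finset.sum_div,
        ← Finset.mul_sum, hsb]
    rw [e]
    rcases eq_or_ne Δ 0 with h0 | h0
    · have hax := haΔ x hx h0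
      have hax' : (1:ℝ)/m - (∑ y ∈ T, (c x y:ℕ))/N = 0 := hax
      rw [h0, hax, zero_mul, zero_div, add_zero]
      push_cast at hax' ⊢
      linarith
    · rw [mul_div_assoc, div_self h0, mul_one]
      have hax' : a x = 1/(m:ℝ) - (∑ y ∈ T, (c x y:ℕ))/N := rfl
      rw [hax']
      push_cast
      ring
  · intro y hy
    have e : ∑ x ∈ S, (if (x, y) ∈ S ×ˢ T then (c x y)/(N:ℝ) + a x * b y / Δ else 0)
        = (∑ x ∈ S, ((c x y : ℕ):ℝ))/N + Δ * b y / Δ := by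
      rw [Finset.sum_congr rfl
        (fun x hx => if_pos (mem_product.mpr ⟨hx, hy⟩)),
        Finset.sum_add_distrib, ← Finset.sum_div, ← Finset.sum_div,
        ← Finset.sum_mul, hsa]
    rw [e]
    rcases eq_or_ne Δ 0 with h0 | h0
    · have hby := hbΔ y hy h0
      have hby' : (1:ℝ)/n - (∑ x ∈ S, (c x y:ℕ))/N = 0 := hby
      rw [h0, hby, mul_zero, zero_div, add_zero]
      push_cast at hby' ⊢
      linarith
    · rw [mul_comm, mul_div_assoc, div_self h0, mul_one]
      have hby' : b y = 1/(n:ℝ) - (∑ x ∈ S, (c x y:ℕ))/N := rfl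
      rw [hby']
      push_cast
      ring
  · have e1 : ∀ p ∈ (S ×ˢ T) \ D,
        (if p ∈ S ×ˢ T then (c p.1 p.2)/(N:ℝ) + a p.1 * b p.2 / Δ else 0)
          = a p.1 * b p.2 / Δ := by
      intro p hp
      rw [mem_sdiff] at hp
      rw [if_pos hp.1]
      have hc0 : c p.1 p.2 = 0 :=
        suppc p.1 (mem_product.mp hp.1).1 p.2 (by simpa using hp.2)
      rw [hc0]
      push_cast
      rw [zero_div, zero_add]
    rw [Finset.sum_congr rfl e1]
    have e2 : ∑ p ∈ (S ×ˢ T) \ D, a p.1 * b p.2 / Δ ≤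
        ∑ p ∈ S ×ˢ T, a p.1 * b p.2 / Δ := by
      apply Finset.sum_le_sum_of_subset_of_nonneg (sdiff_subset)
      intro p _ _
      exact div_nonneg (mul_nonneg (ha0 p.1) (hb0 p.2)) hΔ0
    have e3 : ∑ p ∈ S ×ˢ T, a p.1 * b p.2 / Δ = Δ * Δ / Δ := by
      rw [← Finset.sum_div, Finset.sum_product, ← Finset.sum_mul_sum, hsa, hsb]
    rcases eq_or_ne Δ 0 with h0 | h0
    · calc _ ≤ ∑ p ∈ S ×ˢ T, a p.1 * b p.2 / Δ := e2
        _ = Δ * Δ / Δ := e3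
        _ = 0 := by rw [h0]; simp
        _ ≤ ε := hε0
    · calc _ ≤ ∑ p ∈ S ×ˢ T, a p.1 * b p.2 / Δ := e2
        _ = Δ * Δ / Δ := e3
        _ = Δ := by rw [mul_div_assoc, div_self h0, mul_one]
        _ ≤ ε := hΔε
end

section
/- Let G be a d-regular non-bipartite graph on n vertices with signless Laplacian Q = dI + A, where A is the adjacency matrix. If d ≥ αn for some constant α > 1/2, then det Q = 2 d^n exp(-1/2 - n/(2d) + θ) for some θ with |θ| ≤ c_α, where c_α = ((1-α)/α)^{3/2} / (1 - ((1-α)/α)^{1/2}). -/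
open Matrix Finset

private lemma log_quad_bound {x b : ℝ} (hx : |x| ≤ b) (hb : b < 1) :
    |Real.log (1+x) - x + x^2/2| ≤ x^2 * b / (1-b) := by
  have hb0 : 0 ≤ b := le_trans (abs_nonneg x) hx
  have hx1 : |x| < 1 := lt_of_le_of_lt hx hb
  have h := Real.abs_log_sub_add_sum_range_le (x := -x) (by rwa [abs_neg]) 2
  rw [abs_neg] at h
  have e1 : (∑ i ∈ Finset.range 2, (-x) ^ (i + 1) / (i + 1)) + Real.log (1 - -x)
      = Real.log (1+x) - x + x^2/2 := by
    rw [Finset.sum_range_succ, Finset.sum_range_succ, Finset.sum_range_zero]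
    push_cast
    rw [sub_neg_eq_add]
    ring
  rw [e1] at h
  refine le_trans h ?_
  have h3 : |x|^(2+1) ≤ x^2 * b := by
    calc |x|^(2+1) = x^2 * |x| := by rw [← sq_abs]; ring
    _ ≤ x^2 * b := mul_le_mul_of_nonneg_left hx (sq_nonneg x)
  exact div_le_div₀ (mul_nonneg (sq_nonneg x) hb0) h3 (by linarith) (by linarith)

theorem stmt4 (n d : ℕ) (α : ℝ) (hα : 1/2 < α) (hn : 0 < n)
    (G : SimpleGraph (Fin n)) [DecidableRel G.Adj]
    (hreg : G.IsRegularOfDegree d) (hd : α * n ≤ d)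
    (hnonbip : ¬ G.Colorable 2) :
    ∃ θ : ℝ,
      |θ| ≤ ((1 - α)/α) ^ ((3:ℝ)/2) / (1 - ((1 - α)/α) ^ ((1:ℝ)/2)) ∧
      ((d : ℝ) • (1 : Matrix (Fin n) (Fin n) ℝ) + G.adjMatrix ℝ).det
        = 2 * (d : ℝ)^n * Real.exp (-1/2 - (n : ℝ)/(2*d) + θ) := by
  classical
  have hα0 : (0:ℝ) < α := by linarith
  have hn0 : (0:ℝ) < n := by exact_mod_cast hn
  have hd0 : (0:ℝ) < d := lt_of_lt_of_le (by positivity) hd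
  set A : Matrix (Fin n) (Fin n) ℝ := G.adjMatrix ℝ with hAdef
  have hA : A.IsHermitian := Matrix.IsHermitian.ext fun i j => by
    simp [hAdef, SimpleGraph.adjMatrix_apply, G.adj_comm]
  set μ : Fin n → ℝ := hA.eigenvalues with hμdef
  set U : Matrix (Fin n) (Fin n) ℝ :=
    (Matrix.IsHermitian.eigenvectorUnitary hA : Matrix (Fin n) (Fin n) ℝ) with hUdef
  have hU1 : U * star U = 1 :=
    Matrix.mem_unitaryGroup_iff.mp (Matrix.IsHermitian.eigenvectorUnitary hA).2
  have hU2 : star U * U = 1 :=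
    Matrix.mem_unitaryGroup_iff'.mp (Matrix.IsHermitian.eigenvectorUnitary hA).2
  have hspec : A = U * Matrix.diagonal μ * star U := by
    have h := hA.spectral_theorem
    rw [RCLike.ofReal_real_eq_id] at h
    simpa using h
  have hdetconj : ∀ X : Matrix (Fin n) (Fin n) ℝ, (U * X * star U).det = X.det := fun X => by
    rw [Matrix.det_mul_right_comm, hU1, Matrix.one_mul]
  have htrconj : ∀ X : Matrix (Fin n) (Fin n) ℝ, (U * X * star U).trace = X.trace := fun X => by
    rw [Matrix.trace_mul_cycle, hU2, Matrix.one_mul]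
  have hsmul : ∀ c : ℝ, U * (c • (1:Matrix (Fin n) (Fin n) ℝ)) * star U = c • 1 := fun c => by
    rw [mul_smul_comm, mul_one, smul_mul_assoc, hU1]
  have hdet_add : ∀ c : ℝ,
      (c • (1:Matrix (Fin n) (Fin n) ℝ) + A).det = ∏ i, (c + μ i) := fun c => by
    have h1 : c • (1:Matrix (Fin n) (Fin n) ℝ) + A
        = U * (c • 1 + Matrix.diagonal μ) * star U := by
      rw [Matrix.mul_add, Matrix.add_mul, hsmul c, ← hspec]
    rw [h1, hdetconj, Matrix.smul_one_eq_diagonal, Matrix.diagonal_add, Matrix.det_diagonal]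
  have hdet_sub : ((d:ℝ) • (1:Matrix (Fin n) (Fin n) ℝ) - A).det = ∏ i, ((d:ℝ) - μ i) := by
    have h1 : (d:ℝ) • (1:Matrix (Fin n) (Fin n) ℝ) - A
        = U * ((d:ℝ) • 1 - Matrix.diagonal μ) * star U := by
      rw [Matrix.mul_sub, Matrix.sub_mul, hsmul, ← hspec]
    rw [h1, hdetconj, Matrix.smul_one_eq_diagonal, Matrix.diagonal_sub, Matrix.det_diagonal]
  -- d is an eigenvalue
  have hker : ((d:ℝ) • (1:Matrix (Fin n) (Fin n) ℝ) - A) *ᵥ (Function.const (Fin n) (1:ℝ)) = 0 := by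
    funext i
    simp [Matrix.sub_mulVec, Matrix.smul_mulVec, Matrix.one_mulVec, hAdef,
      SimpleGraph.adjMatrix_mulVec_const_apply_of_regular hreg, hreg i, sub_self]
  have hvne : Function.const (Fin n) (1:ℝ) ≠ 0 := by
    intro h
    have := congrFun h ⟨0, hn⟩
    simpa using this
  have hdet0 : ((d:ℝ) • (1:Matrix (Fin n) (Fin n) ℝ) - A).det = 0 :=
    Matrix.exists_mulVec_eq_zero_iff.mp ⟨_, hvne, hker⟩
  obtain ⟨i₀, -, hi₀⟩ := Finset.prod_eq_zero_iff.mp (hdet_sub ▸ hdet0)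
  have hμi₀ : μ i₀ = d := by linarith [sub_eq_zero.mp hi₀]
  -- trace identities
  have htrA : Matrix.trace A = ∑ i, μ i := by
    conv_lhs => rw [hspec]
    rw [htrconj, Matrix.trace_diagonal]
  have htr0 : ∑ i, μ i = 0 := by
    rw [← htrA, hAdef]
    simp
  have hAA : A * A = U * (Matrix.diagonal μ * Matrix.diagonal μ) * star U := by
    conv_lhs => rw [hspec]
    rw [show ∀ X Y : Matrix (Fin n) (Fin n) ℝ,
        (U * X * star U) * (U * Y * star U) = U * (X * (star U * U) * Y) * star U from
      fun X Y => by simp only [mul_assoc], hU2]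
    simp only [mul_one]
  have htr2 : ∑ i, μ i * μ i = (n:ℝ) * d := by
    have h1 : Matrix.trace (A * A) = ∑ i, μ i * μ i := by
      rw [hAA, htrconj, Matrix.diagonal_mul_diagonal, Matrix.trace_diagonal]
    have h2 : Matrix.trace (A * A) = (n:ℝ) * d := by
      rw [Matrix.trace]
      have : ∀ i : Fin n, (A * A).diag i = (d:ℝ) := fun i => by
        show (A * A) i i = (d:ℝ)
        rw [hAdef, SimpleGraph.adjMatrix_mul_self_apply_self]
        exact_mod_cast congrArg Nat.cast (hreg i)
      rw [Finset.sum_congr rfl fun i _ => this i]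
      simp [mul_comm]
    rw [← h1, h2]
  -- sums over the other eigenvalues
  set s : Finset (Fin n) := Finset.univ.erase i₀ with hsdef
  have hsum1 : ∑ j ∈ s, μ j = -(d:ℝ) := by
    have h : μ i₀ + ∑ x ∈ Finset.univ.erase i₀, μ x = ∑ x : Fin n, μ x :=
      Finset.add_sum_erase _ _ (Finset.mem_univ i₀)
    rw [hsdef]
    rw [htr0, hμi₀] at h
    linarith
  have hsum2 : ∑ j ∈ s, μ j * μ j = (n:ℝ) * d - d * d := by
    have h : μ i₀ * μ i₀ + ∑ x ∈ Finset.univ.erase i₀, μ x * μ x = ∑ x : Fin n, μ x * μ x :=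
      Finset.add_sum_erase _ (fun x => μ x * μ x) (Finset.mem_univ i₀)
    rw [hsdef]
    rw [htr2, hμi₀] at h
    linarith
  have hS2 : ∑ j ∈ s, (μ j / d)^2 = (n:ℝ)/d - 1 := by
    have h1 : ∑ j ∈ s, (μ j / d)^2 = (∑ j ∈ s, μ j * μ j) / (d*d) := by
      rw [Finset.sum_div]
      exact Finset.sum_congr rfl fun j _ => by field_simp
    rw [h1, hsum2]
    field_simp
  have hS2nonneg : (0:ℝ) ≤ (n:ℝ)/d - 1 := by
    rw [← hS2]
    positivity
  have hS1 : ∑ j ∈ s, μ j / d = -1 := by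
    rw [← Finset.sum_div, hsum1]
    field_simp
  set β : ℝ := Real.sqrt ((n:ℝ)/d - 1) with hβdef
  have hβ0 : 0 ≤ β := Real.sqrt_nonneg _
  have hβsq : β^2 = (n:ℝ)/d - 1 := Real.sq_sqrt hS2nonneg
  have hγ : (n:ℝ)/d - 1 ≤ (1-α)/α := by
    have h1 : (n:ℝ)/d ≤ 1/α := by
      rw [div_le_div_iff₀ hd0 hα0]
      linarith
    have h2 : (1-α)/α = 1/α - 1 := by field_simp
    linarith
  have hγ0 : (0:ℝ) ≤ (1-α)/α := le_trans hS2nonneg hγ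
  have hβle : β ≤ Real.sqrt ((1-α)/α) := Real.sqrt_le_sqrt hγ
  have hs'lt : Real.sqrt ((1-α)/α) < 1 := by
    rw [Real.sqrt_lt' one_pos, one_pow, div_lt_one hα0]
    linarith
  have hβ1 : β < 1 := lt_of_le_of_lt hβle hs'lt
  have habs : ∀ j ∈ s, |μ j / d| ≤ β := by
    intro j hj
    have h1 : (μ j / d)^2 ≤ (n:ℝ)/d - 1 := by
      rw [← hS2]
      exact Finset.single_le_sum (fun k _ => sq_nonneg (μ k / d)) hj
    have h2 := Real.sqrt_le_sqrt h1
    rwa [Real.sqrt_sq_eq_abs] at h2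
  have hpos : ∀ j ∈ s, (0:ℝ) < 1 + μ j / d := by
    intro j hj
    have := lt_of_le_of_lt (habs j hj) hβ1
    have := (abs_lt.mp this).1
    linarith
  set θ : ℝ := ∑ j ∈ s, (Real.log (1 + μ j / d) - μ j / d + (μ j / d)^2/2) with hθdef
  refine ⟨θ, ?_, ?_⟩
  · -- the bound on θ
    have hθb : |θ| ≤ β^3 / (1-β) := by
      calc |θ| ≤ ∑ j ∈ s, |Real.log (1 + μ j / d) - μ j / d + (μ j / d)^2/2| :=
            Finset.abs_sum_le_sum_abs _ _
        _ ≤ ∑ j ∈ s, (μ j / d)^2 * β / (1-β) :=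
            Finset.sum_le_sum fun j hj => log_quad_bound (habs j hj) hβ1
        _ = (∑ j ∈ s, (μ j / d)^2) * β / (1-β) := by
            rw [← Finset.sum_div, ← Finset.sum_mul]
        _ = β^3 / (1-β) := by rw [hS2, ← hβsq]; ring
    refine le_trans hθb ?_
    have e1 : ((1-α)/α) ^ ((1:ℝ)/2) = Real.sqrt ((1-α)/α) := (Real.sqrt_eq_rpow _).symm
    have e2 : ((1-α)/α) ^ ((3:ℝ)/2) = (Real.sqrt ((1-α)/α))^(3:ℕ) := by
      rw [Real.sqrt_eq_rpow, ← Real.rpow_natCast (((1-α)/α) ^ ((1:ℝ)/2)) 3,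
        ← Real.rpow_mul hγ0]
      norm_num
    rw [e1, e2]
    exact div_le_div₀ (by positivity) (pow_le_pow_left₀ hβ0 hβle 3) (by linarith) (by linarith)
  · -- the determinant formula
    have h2v : 1 + μ i₀ / d = 2 := by
      rw [hμi₀, div_self hd0.ne']
      norm_num
    have hlogsum : ∑ j ∈ s, Real.log (1 + μ j / d) = -1/2 - (n:ℝ)/(2*d) + θ := by
      have expand : θ = (∑ j ∈ s, Real.log (1 + μ j / d)) - (∑ j ∈ s, μ j / d)
          + (∑ j ∈ s, (μ j / d)^2)/2 := by
        rw [hθdef, Finset.sum_add_distrib, Finset.sum_sub_distrib, Finset.sum_div]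
      rw [hS1, hS2] at expand
      have : (n:ℝ)/(2*d) = ((n:ℝ)/d)/2 := by ring
      linarith
    have hexp : ∏ j ∈ s, (1 + μ j / d) = Real.exp (∑ j ∈ s, Real.log (1 + μ j / d)) := by
      rw [Real.exp_sum]
      exact Finset.prod_congr rfl fun j hj => (Real.exp_log (hpos j hj)).symm
    rw [hdet_add ((d:ℝ))]
    calc ∏ i, ((d:ℝ) + μ i) = ∏ i, ((d:ℝ) * (1 + μ i / d)) := by
          refine Finset.prod_congr rfl fun i _ => ?_
          field_simp
      _ = (d:ℝ)^n * ∏ i, (1 + μ i / d) := by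
          rw [Finset.prod_mul_distrib, Finset.prod_const, Finset.card_univ, Fintype.card_fin]
      _ = (d:ℝ)^n * ((1 + μ i₀ / d) * ∏ j ∈ s, (1 + μ j / d)) := by
          rw [hsdef, ← Finset.mul_prod_erase Finset.univ (fun i => 1 + μ i / (d:ℝ))
            (Finset.mem_univ i₀)]
      _ = 2 * (d:ℝ)^n * Real.exp (-1/2 - (n:ℝ)/(2*(d:ℝ)) + θ) := by
          rw [h2v, hexp, hlogsum]
          ring
end

section
/- Let G be a d-regular graph on n vertices such that n ≤ ε d² for some ε ≤ 1/4 and every pair of distinct vertices has (d²/n)(1 ± ε) common neighbours. Then the eigenvalues χ_1 ≥ ⋯ ≥ χ_n of A/d satisfy |∑_{i=2}^n χ_i³| ≤ ε and ∑_{i=2}^n χ_i⁴ ≤ 2ε. -/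
open Polynomial

open Matrix in
lemma charpoly_conj_aux {m : Type*} [Fintype m] [DecidableEq m] {R : Type*} [CommRing R]
    (U A V : Matrix m m R) (hUV : U * V = 1) :
    (U * A * V).charpoly = A.charpoly := by
  have hVU : V * U = 1 := mul_eq_one_comm.mp hUV
  unfold Matrix.charpoly
  have key : charmatrix (U * A * V) =
      (C : R →+* R[X]).mapMatrix U * charmatrix A * (C : R →+* R[X]).mapMatrix V := by
    unfold charmatrix
    rw [Matrix.mul_sub, Matrix.sub_mul]
    congr 1
    · rw [mul_assoc, ((Matrix.scalar_commute (X : R[X]) (fun r' => Commute.all _ _)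
        ((C : R →+* R[X]).mapMatrix V)).eq : (scalar m) X * _ = _), ← mul_assoc,
        ← RingHom.map_mul, hUV, RingHom.map_one, one_mul]
    · simp only [RingHom.map_mul]
  have h1 : ((C : R →+* R[X]).mapMatrix V).det * ((C : R →+* R[X]).mapMatrix U).det = 1 := by
    rw [← det_mul, ← RingHom.map_mul, hVU, RingHom.map_one, det_one]
  rw [key, det_mul, det_mul, mul_comm, ← mul_assoc, h1, one_mul]

open Matrix in
lemma trace_pow_of_charpoly {m : ℕ} (N : Matrix (Fin m) (Fin m) ℝ) (hN : N.IsHermitian)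
    (χ : Fin m → ℝ) (h : N.charpoly = ∏ i, (X - C (χ i))) (k : ℕ) :
    (N ^ k).trace = ∑ i, χ i ^ k := by
  set U : Matrix (Fin m) (Fin m) ℝ := (hN.eigenvectorUnitary : Matrix (Fin m) (Fin m) ℝ) with hU
  set v : Fin m → ℝ := RCLike.ofReal ∘ hN.eigenvalues with hv
  have hUs : U * star U = 1 := by
    exact Unitary.coe_mul_star_self hN.eigenvectorUnitary
  have hsU : star U * U = 1 := by
    exact Unitary.coe_star_mul_self hN.eigenvectorUnitary
  have hspec : N = U * diagonal v * star U := hN.spectral_theorem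
  have hpow : ∀ j : ℕ, N ^ j = U * diagonal v ^ j * star U := by
    intro j
    induction j with
    | zero => simp [hUs]
    | succ j ih =>
        rw [pow_succ, ih, pow_succ, hspec]
        calc U * diagonal v ^ j * star U * (U * diagonal v * star U)
            = U * diagonal v ^ j * (star U * U) * diagonal v * star U := by
              simp only [mul_assoc]
          _ = U * (diagonal v ^ j * diagonal v) * star U := by
              rw [hsU]; simp only [mul_one, mul_assoc]
  have htr : (N ^ k).trace = ∑ i, v i ^ k := by
    rw [hpow k, trace_mul_cycle, hsU, one_mul, diagonal_pow, trace_diagonal]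
    simp
  have hcd : (diagonal v).charpoly = ∏ i, (X - C (v i)) := by
    rw [Matrix.charpoly_of_upperTriangular _ (Matrix.blockTriangular_diagonal v)]
    simp
  have hch : (∏ i, (X - C (χ i))) = ∏ i, (X - C (v i)) := by
    rw [← h, ← hcd, hspec]
    exact charpoly_conj_aux U (diagonal v) (star U) hUs
  have hms : Multiset.map χ Finset.univ.val = Multiset.map v Finset.univ.val := by
    have h1 := congrArg Polynomial.roots hch
    rwa [Finset.prod_eq_multiset_prod, Finset.prod_eq_multiset_prod,
      show (Multiset.map (fun i => X - C (χ i)) Finset.univ.val)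
          = Multiset.map (fun a => X - C a) (Multiset.map χ Finset.univ.val) by
        rw [Multiset.map_map]; rfl,
      show (Multiset.map (fun i => X - C (v i)) Finset.univ.val)
          = Multiset.map (fun a => X - C a) (Multiset.map v Finset.univ.val) by
        rw [Multiset.map_map]; rfl,
      roots_multiset_prod_X_sub_C, roots_multiset_prod_X_sub_C] at h1
  rw [htr]
  have hw : ∀ w : Fin m → ℝ, ∑ i, w i ^ k = (Multiset.map (fun a => a ^ k)
      (Multiset.map w Finset.univ.val)).sum := by
    intro w; rw [Multiset.map_map, Finset.sum_eq_multiset_sum]; rfl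
  rw [hw χ, hw v, hms]

theorem stmt5 (n d : ℕ) (ε : ℝ) (hε : 0 < ε) (hε4 : ε ≤ 1/4)
    (hn : 0 < n) (hd : 0 < d) (hnd : (n : ℝ) ≤ ε * d^2)
    (G : SimpleGraph (Fin n)) [DecidableRel G.Adj]
    (hreg : G.IsRegularOfDegree d)
    (hcommon : ∀ j k : Fin n, j ≠ k →
      |((G.commonNeighbors j k).ncard : ℝ) - (d:ℝ)^2/n| ≤ ε * (d:ℝ)^2/n)
    (χ : Fin n → ℝ) (hmono : Antitone χ)
    (hchar : (((1 : ℝ)/d) • (G.adjMatrix ℝ)).charpoly = ∏ i, (X - C (χ i)))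
    (hχ1 : χ ⟨0, hn⟩ = 1) :
    |∑ i ∈ Finset.univ.erase ⟨0, hn⟩, (χ i)^3| ≤ ε ∧
    ∑ i ∈ Finset.univ.erase ⟨0, hn⟩, (χ i)^4 ≤ 2 * ε := by
  classical
  set A := G.adjMatrix ℝ with hA
  have hdr : (0:ℝ) < d := by exact_mod_cast hd
  have hnr : (0:ℝ) < n := by exact_mod_cast hn
  have hd1 : (1:ℝ) ≤ d := by exact_mod_cast hd
  -- matrix entry identities
  have hB : ∀ u j : Fin n, (A * A) u j = ((G.commonNeighbors u j).ncard : ℝ) := by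
    intro u j
    have hset : G.commonNeighbors u j
        = ↑((G.neighborFinset u).filter (fun w => G.Adj w j)) := by
      ext w
      simp [SimpleGraph.mem_commonNeighbors, G.adj_comm]
    rw [hset, Set.ncard_coe_finset, SimpleGraph.adjMatrix_mul_apply]
    simp [hA, SimpleGraph.adjMatrix_apply, Finset.sum_boole]
  have hdiag : ∀ j : Fin n, (A * A) j j = (d : ℝ) := by
    intro j
    rw [G.adjMatrix_mul_self_apply_self j]
    exact_mod_cast hreg j
  have hrowA : ∀ w : Fin n, ∑ k, A w k = (d : ℝ) := by
    intro w
    have h1 : ∑ k, A w k = ((Finset.univ.filter (fun k => G.Adj w k)).card : ℝ) := by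
      simp [hA, SimpleGraph.adjMatrix_apply, Finset.sum_boole]
    rw [h1, ← SimpleGraph.neighborFinset_eq_filter, G.card_neighborFinset_eq_degree, hreg w]
  have hrow : ∀ j : Fin n, ∑ k, (A * A) j k = (d : ℝ)^2 := by
    intro j
    have h1 : ∀ k, (A * A) j k = ∑ u ∈ G.neighborFinset j, A u k := fun k => by
      rw [SimpleGraph.adjMatrix_mul_apply]
    simp_rw [h1]
    rw [Finset.sum_comm]
    simp_rw [hrowA]
    rw [Finset.sum_const, G.card_neighborFinset_eq_degree, hreg j, nsmul_eq_mul]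
    ring
  have h3 : (A ^ 3).trace = ∑ j, ∑ u ∈ G.neighborFinset j, (A * A) u j := by
    have h2 : A ^ 3 = A * (A * A) := by rw [pow_succ', pow_two]
    rw [h2, Matrix.trace]
    congr 1
    ext j
    rw [Matrix.diag_apply, SimpleGraph.adjMatrix_mul_apply]
  have h4 : (A ^ 4).trace = ∑ j, ∑ k, (A * A) j k * (A * A) k j := by
    have h2 : A ^ 4 = (A * A) * (A * A) := by
      rw [show (4:ℕ) = 2 + 2 by norm_num, pow_add, pow_two]
    rw [h2, Matrix.trace]
    simp [Matrix.diag_apply, Matrix.mul_apply]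
  -- hermitian
  have hM : (((1 : ℝ)/d) • A).IsHermitian := by
    show Matrix.conjTranspose (((1 : ℝ)/d) • A) = ((1 : ℝ)/d) • A
    ext i j
    simp [hA, Matrix.conjTranspose_apply, SimpleGraph.adjMatrix_apply, G.adj_comm]
  have t3 := trace_pow_of_charpoly _ hM χ hchar 3
  have t4 := trace_pow_of_charpoly _ hM χ hchar 4
  have hsm : ∀ k : ℕ, ((((1 : ℝ)/d) • A) ^ k).trace = (1/(d:ℝ))^k * (A ^ k).trace := by
    intro k
    rw [_root_.smul_pow, Matrix.trace_smul, smul_eq_mul]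
  rw [hsm] at t3 t4
  -- erase sums
  have he3 : ∑ i ∈ Finset.univ.erase ⟨0, hn⟩, (χ i)^3 = (∑ i, (χ i)^3) - 1 := by
    rw [← Finset.add_sum_erase Finset.univ (fun i => (χ i)^3) (Finset.mem_univ ⟨0, hn⟩), hχ1]
    ring
  have he4 : ∑ i ∈ Finset.univ.erase ⟨0, hn⟩, (χ i)^4 = (∑ i, (χ i)^4) - 1 := by
    rw [← Finset.add_sum_erase Finset.univ (fun i => (χ i)^4) (Finset.mem_univ ⟨0, hn⟩), hχ1]
    ring
  constructor
  · -- third powers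
    have hsub3 : (A ^ 3).trace - (d:ℝ)^3
        = ∑ j, ∑ u ∈ G.neighborFinset j, ((A * A) u j - (d:ℝ)^2/n) := by
      have e1 : ∀ j : Fin n, ∑ u ∈ G.neighborFinset j, ((A * A) u j - (d:ℝ)^2/n)
          = (∑ u ∈ G.neighborFinset j, (A * A) u j) - d * ((d:ℝ)^2/n) := by
        intro j
        rw [Finset.sum_sub_distrib, Finset.sum_const, G.card_neighborFinset_eq_degree,
          hreg j, nsmul_eq_mul]
      rw [h3, Finset.sum_congr rfl (fun j _ => e1 j), Finset.sum_sub_distrib,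
        Finset.sum_const, Finset.card_univ, Fintype.card_fin, nsmul_eq_mul]
      have : (n:ℝ) * ((d:ℝ) * ((d:ℝ)^2/n)) = (d:ℝ)^3 := by field_simp
      rw [this]
    have habs3 : |(A ^ 3).trace - (d:ℝ)^3| ≤ ε * (d:ℝ)^3 := by
      rw [hsub3]
      refine le_trans (Finset.abs_sum_le_sum_abs _ _) ?_
      refine le_trans (Finset.sum_le_sum
        (fun j _ => Finset.abs_sum_le_sum_abs
          (fun u => (A * A) u j - (d:ℝ)^2/n) (G.neighborFinset j))) ?_
      have hbd : ∀ j : Fin n, ∀ u ∈ G.neighborFinset j,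
          |(A * A) u j - (d:ℝ)^2/n| ≤ ε * (d:ℝ)^2/n := by
        intro j u hu
        have hadj : G.Adj j u := (G.mem_neighborFinset j u).mp hu
        rw [hB]
        exact hcommon u j hadj.ne'
      refine le_trans (Finset.sum_le_sum (fun j _ => Finset.sum_le_sum (hbd j))) ?_
      have e2 : ∀ j : Fin n, ∑ _u ∈ G.neighborFinset j, (ε * (d:ℝ)^2/n)
          = (d:ℝ) * (ε * (d:ℝ)^2/n) := by
        intro j
        rw [Finset.sum_const, G.card_neighborFinset_eq_degree, hreg j, nsmul_eq_mul]
      rw [Finset.sum_congr rfl (fun j _ => e2 j), Finset.sum_const, Finset.card_univ,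
        Fintype.card_fin, nsmul_eq_mul]
      have : (n:ℝ) * ((d:ℝ) * (ε * (d:ℝ)^2/n)) = ε * (d:ℝ)^3 := by field_simp
      rw [this]
    rw [he3, ← t3]
    have e3 : (1/(d:ℝ))^3 * (A ^ 3).trace - 1
        = (1/(d:ℝ))^3 * ((A ^ 3).trace - (d:ℝ)^3) := by
      field_simp
    rw [e3, abs_mul, abs_of_pos (by positivity : (0:ℝ) < (1/(d:ℝ))^3)]
    calc (1/(d:ℝ))^3 * |(A ^ 3).trace - (d:ℝ)^3|
        ≤ (1/(d:ℝ))^3 * (ε * (d:ℝ)^3) := by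
          exact mul_le_mul_of_nonneg_left habs3 (by positivity)
      _ = ε := by field_simp
  · -- fourth powers
    set M0 : ℝ := (d:ℝ)^2/n + ε * (d:ℝ)^2/n with hM0
    have hj4 : ∀ j : Fin n, ∑ k, (A * A) j k * (A * A) k j
        ≤ (d:ℝ)^2 + M0 * ((d:ℝ)^2 - d) := by
      intro j
      rw [← Finset.add_sum_erase Finset.univ (fun k => (A * A) j k * (A * A) k j)
        (Finset.mem_univ j)]
      have h1 : (A * A) j j * (A * A) j j = (d:ℝ)^2 := by rw [hdiag]; ring
      have h2 : ∑ k ∈ Finset.univ.erase j, (A * A) j k * (A * A) k j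
          ≤ M0 * ((d:ℝ)^2 - d) := by
        have hle : ∀ k ∈ Finset.univ.erase j,
            (A * A) j k * (A * A) k j ≤ M0 * (A * A) j k := by
          intro k hk
          have hkj : k ≠ j := Finset.ne_of_mem_erase hk
          have hnn : 0 ≤ (A * A) j k := by rw [hB]; positivity
          have hub : (A * A) k j ≤ M0 := by
            rw [hB]
            have h5 := (abs_le.mp (hcommon k j hkj)).2
            rw [hM0]; linarith
          calc (A * A) j k * (A * A) k j ≤ (A * A) j k * M0 :=
                mul_le_mul_of_nonneg_left hub hnn
            _ = M0 * (A * A) j k := mul_comm _ _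
        refine le_trans (Finset.sum_le_sum hle) ?_
        rw [← Finset.mul_sum]
        have hsum : ∑ k ∈ Finset.univ.erase j, (A * A) j k = (d:ℝ)^2 - d := by
          have h6 : (A * A) j j + ∑ k ∈ Finset.univ.erase j, (A * A) j k = (d:ℝ)^2 := by
            rw [Finset.add_sum_erase Finset.univ (fun k => (A * A) j k) (Finset.mem_univ j)]
            exact hrow j
          rw [hdiag j] at h6
          linarith
        rw [hsum]
      linarith
    have htr4 : (A ^ 4).trace ≤ (n:ℝ) * ((d:ℝ)^2 + M0 * ((d:ℝ)^2 - d)) := by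
      rw [h4]
      refine le_trans (Finset.sum_le_sum (fun j _ => hj4 j)) ?_
      rw [Finset.sum_const, Finset.card_univ, Fintype.card_fin, nsmul_eq_mul]
    rw [he4, ← t4]
    have e4 : (1/(d:ℝ))^4 * ((n:ℝ) * ((d:ℝ)^2 + M0 * ((d:ℝ)^2 - d)))
        = (n:ℝ)/(d:ℝ)^2 + (1+ε) * (((d:ℝ)^2 - d)/(d:ℝ)^2) := by
      rw [hM0]; field_simp
    have hS4 : (1/(d:ℝ))^4 * (A ^ 4).trace
        ≤ (n:ℝ)/(d:ℝ)^2 + (1+ε) * (((d:ℝ)^2 - d)/(d:ℝ)^2) := by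
      rw [← e4]
      exact mul_le_mul_of_nonneg_left htr4 (by positivity)
    have hb1 : (n:ℝ)/(d:ℝ)^2 ≤ ε := by
      rw [div_le_iff₀ (by positivity)]
      linarith
    have hb2 : (1+ε) * (((d:ℝ)^2 - d)/(d:ℝ)^2) ≤ 1 + ε := by
      have hq : ((d:ℝ)^2 - d)/(d:ℝ)^2 ≤ 1 := by
        rw [div_le_one (by positivity)]
        nlinarith
      nlinarith [hq, (by positivity : (0:ℝ) < 1 + ε)]
    linarith
end

section
/- Suppose for each m with 1 ≤ m ≤ M, the ratio p_m/p_{m-1} of probabilities satisfies p_m/p_{m-1} = (h²/(2m))(1 + θ_m) with |θ_m| ≤ C(h² + m)/n for an absolute constant C, where p_0 = e^{-h²/2}(1 + θ_0) with |θ_0| ≤ C h⁴/n, M = max{8h², ⌈log n⌉}, and h⁴ M ≤ n. Then for all 0 ≤ m ≤ M, p_m = (e^{-h²/2}/m!) (h²/2)^m (1 + O((h⁴ + log² n)/n)), i.e. there is an absolute constant C' such that |p_m · m! · (2/h²)^m · e^{h²/2} - 1| ≤ C'(h⁴ + log² n)/n. -/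
set_option maxHeartbeats 1000000 in
theorem stmt18 (C : ℝ) (hC : 0 < C) :
    ∃ C' : ℝ, 0 < C' ∧
      ∀ (n h : ℕ) (p : ℕ → ℝ) (M : ℕ),
        2 ≤ n → 1 ≤ h →
        M = max (8 * h^2) ⌈Real.log n⌉₊ →
        ((h : ℝ)^4 * M ≤ n) →
        (∀ m, m ≤ M → 0 < p m) →
        (∃ θ₀ : ℝ, |θ₀| ≤ C * (h:ℝ)^4 / n ∧ C * (h:ℝ)^4 / n < 1/2 ∧
          p 0 = Real.exp (-(h:ℝ)^2/2) * (1 + θ₀)) →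
        (∀ m, 1 ≤ m → m ≤ M →
          ∃ θ : ℝ, |θ| ≤ C * ((h:ℝ)^2 + m) / n ∧ C * ((h:ℝ)^2 + m) / n < 1/2 ∧
            p m / p (m - 1) = (h:ℝ)^2 / (2*m) * (1 + θ)) →
        ∀ m, m ≤ M →
          |p m * (Nat.factorial m : ℝ) * (2 / (h:ℝ)^2)^m * Real.exp ((h:ℝ)^2/2) - 1|
            ≤ C' * ((h:ℝ)^4 + (Real.log n)^2) / n := by
  refine ⟨129 * C * Real.exp (65 + 56 * C), by positivity, ?_⟩
  intro n h p M hn hh hM hMn hp hp0 hrec m hmM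
  obtain ⟨θ₀, hθ₀, hθ₀half, hq0⟩ := hp0
  have hn0 : (0:ℝ) < n := by
    have : (2:ℝ) ≤ n := by exact_mod_cast hn
    linarith
  have hh1 : (1:ℝ) ≤ (h:ℝ) := by exact_mod_cast hh
  have hh2 : (0:ℝ) < (h:ℝ)^2 := by positivity
  have hh21 : (1:ℝ) ≤ (h:ℝ)^2 := by nlinarith
  have hM8 : 8 * h^2 ≤ M := by rw [hM]; exact le_max_left _ _
  have hM1 : 1 ≤ M := le_trans (by nlinarith) hM8
  set L := Real.log n with hLdef
  have hL2 : Real.log 2 ≤ L := by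
    apply Real.log_le_log (by norm_num)
    exact_mod_cast hn
  have hL23 : (2/3 : ℝ) ≤ L := by
    have := Real.log_two_gt_d9
    linarith
  have hLpos : 0 < L := by linarith
  have hceil : (⌈L⌉₊ : ℝ) ≤ L + 1 := (Nat.ceil_lt_add_one hLpos.le).le
  set Mr := (M:ℝ) with hMrdef
  have hMr0 : 0 ≤ Mr := Nat.cast_nonneg M
  have hMr8 : 8*(h:ℝ)^2 ≤ Mr := by
    rw [hMrdef]
    exact_mod_cast Nat.cast_le.mpr hM8
  have hMh2 : (h:ℝ)^2 ≤ Mr := by linarith only [hMr8, hh2.le]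
  have hMreq : Mr = max (8*(h:ℝ)^2) ((⌈L⌉₊:ℕ) : ℝ) := by
    rw [hMrdef, hM]
    push_cast
    ring
  have hM2sq : Mr^2 ≤ 64*(h:ℝ)^4 + 7*L^2 := by
    rcases le_total ((⌈L⌉₊:ℕ) : ℝ) (8*(h:ℝ)^2) with hc | hc
    · have : Mr = 8*(h:ℝ)^2 := by rw [hMreq, max_eq_left hc]
      rw [this]
      linarith only [sq_nonneg L]
    · have hMe : Mr = ((⌈L⌉₊:ℕ) : ℝ) := by rw [hMreq, max_eq_right hc]
      have h25 : Mr ≤ (5/2) * L := by rw [hMe]; linarith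
      have hsq25 : Mr^2 ≤ ((5/2)*L)^2 := pow_le_pow_left₀ hMr0 h25 2
      linarith only [hsq25, sq_nonneg L, (by positivity : (0:ℝ) ≤ (h:ℝ)^4)]
  -- log squared bound
  have hL4 : L^2 ≤ 4*(n:ℝ) := by
    have hs : Real.log (Real.sqrt n) ≤ Real.sqrt n - 1 :=
      Real.log_le_sub_one_of_pos (Real.sqrt_pos.mpr hn0)
    have hls : Real.log (Real.sqrt n) = L / 2 := Real.log_sqrt hn0.le
    have hsq : Real.sqrt (n:ℝ) ^ 2 = n := Real.sq_sqrt hn0.le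
    have h1 : L ≤ 2*Real.sqrt n := by linarith only [hs, hls]
    have h2 : L^2 ≤ (2*Real.sqrt n)^2 := pow_le_pow_left₀ hLpos.le h1 2
    have h3 : (2*Real.sqrt (n:ℝ))^2 = 4*(n:ℝ) := by rw [mul_pow, hsq]; ring
    linarith only [h2, h3]
  set t := C * (h:ℝ)^4 / n with htdef
  set b := C * ((h:ℝ)^2 + Mr) / n with hbdef
  have ht0 : 0 ≤ t := by positivity
  have hb0 : 0 ≤ b := by positivity
  obtain ⟨θM, _, hbhalf, _⟩ := hrec M hM1 le_rfl
  have hbhalf' : b < 1/2 := hbhalf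
  -- base case value
  have hexp1 : Real.exp (-(h:ℝ)^2/2) * Real.exp ((h:ℝ)^2/2) = 1 := by
    rw [← Real.exp_add]
    ring_nf
    exact Real.exp_zero
  have hE0 : p 0 * (Nat.factorial 0 : ℝ) * (2/(h:ℝ)^2)^0 * Real.exp ((h:ℝ)^2/2) = 1 + θ₀ := by
    simp only [Nat.factorial_zero, Nat.cast_one, pow_zero, mul_one, hq0]
    linear_combination (1 + θ₀) * hexp1
  have key : ∀ k : ℕ, k ≤ M →
      1 - (t + k * b) ≤ p k * (Nat.factorial k : ℝ) * (2/(h:ℝ)^2)^k * Real.exp ((h:ℝ)^2/2) ∧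
      p k * (Nat.factorial k : ℝ) * (2/(h:ℝ)^2)^k * Real.exp ((h:ℝ)^2/2) ≤ Real.exp (t + k * b) := by
    intro k
    induction k with
    | zero =>
      intro _
      rw [hE0]
      push_cast
      constructor
      · have := abs_le.mp hθ₀
        linarith [this.1]
      · have := abs_le.mp hθ₀
        have h1 : 1 + θ₀ ≤ 1 + t := by linarith [this.2]
        have h2 : 1 + t ≤ Real.exp t := by linarith [Real.add_one_le_exp t]
        simp only [zero_mul, add_zero]
        linarith
    | succ k ih =>
      intro hk1M
      have hkM : k ≤ M := le_trans (Nat.le_succ k) hk1M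
      obtain ⟨hlo, hhi⟩ := ih hkM
      obtain ⟨θ, hθ, hθhalf, heq⟩ := hrec (k+1) (Nat.le_add_left 1 k) hk1M
      simp only [Nat.add_sub_cancel] at heq
      have hpk : p k ≠ 0 := (hp k hkM).ne'
      have hpkpos : 0 < p k := hp k hkM
      rw [div_eq_iff hpk] at heq
      -- θ bound
      have hθb : |θ| ≤ b := by
        refine le_trans hθ ?_
        rw [hbdef]
        have hkm : ((k:ℝ)+1) ≤ Mr := by
          rw [hMrdef]; exact_mod_cast Nat.cast_le.mpr hk1M
        push_cast
        gcongr
      have hθ1 : -b ≤ θ ∧ θ ≤ b := abs_le.mp hθb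
      have h1θpos : (0:ℝ) ≤ 1 + θ := by linarith [hθ1.1]
      -- recursion for E
      have hk1 : ((k:ℝ)+1) ≠ 0 := by positivity
      have hEk1 : p (k+1) * (Nat.factorial (k+1) : ℝ) * (2/(h:ℝ)^2)^(k+1) * Real.exp ((h:ℝ)^2/2)
          = (p k * (Nat.factorial k : ℝ) * (2/(h:ℝ)^2)^k * Real.exp ((h:ℝ)^2/2)) * (1 + θ) := by
        have hfac : (Nat.factorial (k+1) : ℝ) = ((k:ℝ)+1) * (Nat.factorial k : ℝ) := by
          push_cast [Nat.factorial_succ]; ring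
        rw [heq, hfac, pow_succ]
        push_cast
        have hh0 : (h:ℝ) ≠ 0 := (by linarith : (0:ℝ) < h).ne'
        field_simp
        have hhinv : (h:ℝ)^2 * (h:ℝ)⁻¹^2 = 1 := by rw [← mul_pow, mul_inv_cancel₀ hh0, one_pow]
        linear_combination (θ * (h:ℝ)⁻¹ ^ (k * 2) * 2 ^ k * 2 + (h:ℝ)⁻¹ ^ (k * 2) * 2 ^ k * 2) * hhinv
      have hEkpos : 0 < p k * (Nat.factorial k : ℝ) * (2/(h:ℝ)^2)^k * Real.exp ((h:ℝ)^2/2) := by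
        have := Nat.factorial_pos k
        positivity
      constructor
      · calc 1 - (t + ((k:ℕ)+1 : ℕ) * b) ≤ (1 - (t + k*b)) * (1 - b) := by
              push_cast
              have hprod : 0 ≤ (t + (k:ℝ)*b)*b :=
                mul_nonneg (add_nonneg ht0 (mul_nonneg (Nat.cast_nonneg k) hb0)) hb0
              linarith only [hprod]
          _ ≤ (p k * (Nat.factorial k : ℝ) * (2/(h:ℝ)^2)^k * Real.exp ((h:ℝ)^2/2)) * (1 - b) := by
              apply mul_le_mul_of_nonneg_right hlo
              linarith
          _ ≤ (p k * (Nat.factorial k : ℝ) * (2/(h:ℝ)^2)^k * Real.exp ((h:ℝ)^2/2)) * (1 + θ) := by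
              apply mul_le_mul_of_nonneg_left _ hEkpos.le
              linarith [hθ1.1]
          _ = _ := hEk1.symm
      · calc p (k+1) * (Nat.factorial (k+1) : ℝ) * (2/(h:ℝ)^2)^(k+1) * Real.exp ((h:ℝ)^2/2)
            = (p k * (Nat.factorial k : ℝ) * (2/(h:ℝ)^2)^k * Real.exp ((h:ℝ)^2/2)) * (1 + θ) := hEk1
          _ ≤ Real.exp (t + k*b) * (1 + b) := by
              apply mul_le_mul hhi (by linarith [hθ1.2]) h1θpos (Real.exp_pos _).le
          _ ≤ Real.exp (t + k*b) * Real.exp b := by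
              apply mul_le_mul_of_nonneg_left _ (Real.exp_pos _).le
              linarith [Real.add_one_le_exp b]
          _ = Real.exp (t + ((k:ℕ)+1:ℕ) * b) := by
              rw [← Real.exp_add]
              congr 1
              push_cast
              ring
  obtain ⟨hlo, hhi⟩ := key m hmM
  set S := t + Mr * b with hSdef
  have hsS : t + (m:ℝ) * b ≤ S := by
    have hm : (m:ℝ) ≤ Mr := by rw [hMrdef]; exact_mod_cast Nat.cast_le.mpr hmM
    have h2 := mul_le_mul_of_nonneg_right hm hb0
    show t + (m:ℝ) * b ≤ t + Mr * b
    linarith only [h2]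
  have hS0 : 0 ≤ S := by positivity
  -- numeric bounds on S
  have hCh4 : C * (h:ℝ)^4 < (n:ℝ)/2 := by
    rw [htdef] at hθ₀half
    rw [div_lt_iff₀ hn0] at hθ₀half
    linarith
  have e1 : Mr * (h:ℝ)^2 ≤ Mr * Mr := mul_le_mul_of_nonneg_left hMh2 hMr0
  have hSnum : S = (C * (h:ℝ)^4 + C * (Mr * (h:ℝ)^2 + Mr * Mr)) / n := by
    rw [hSdef, htdef, hbdef]; ring
  have hS1 : S ≤ 129 * C * ((h:ℝ)^4 + L^2) / n := by
    rw [hSnum]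
    have f2 : C * (Mr * (h:ℝ)^2) ≤ C * (Mr * Mr) :=
      mul_le_mul_of_nonneg_left e1 hC.le
    have hMM : Mr * Mr ≤ 64*(h:ℝ)^4 + 7*L^2 := by rw [← pow_two]; exact hM2sq
    have f1 : C * (Mr * Mr) ≤ C * (64*(h:ℝ)^4 + 7*L^2) :=
      mul_le_mul_of_nonneg_left hMM hC.le
    have hnum : C * (h:ℝ)^4 + C * (Mr * (h:ℝ)^2 + Mr * Mr) ≤ 129 * C * ((h:ℝ)^4 + L^2) := by
      linarith only [f1, f2, mul_nonneg hC.le (sq_nonneg L), mul_nonneg hC.le (by positivity : (0:ℝ) ≤ (h:ℝ)^4)]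
    gcongr
  have hS2 : S ≤ 65 + 56 * C := by
    rw [hSnum, div_le_iff₀ hn0]
    have hMM : Mr * Mr ≤ 64*(h:ℝ)^4 + 7*L^2 := by rw [← pow_two]; exact hM2sq
    have f1 : C * (Mr * Mr) ≤ C * (64*(h:ℝ)^4 + 7*L^2) :=
      mul_le_mul_of_nonneg_left hMM hC.le
    have f2 : C * (Mr * (h:ℝ)^2) ≤ C * (Mr * Mr) :=
      mul_le_mul_of_nonneg_left e1 hC.le
    have f3 : C * L^2 ≤ C * (4*(n:ℝ)) := mul_le_mul_of_nonneg_left hL4 hC.le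
    linarith only [f1, f2, f3, hCh4, hn0.le, hC.le, mul_nonneg hC.le hn0.le]
  -- |E m - 1| ≤ S * exp S
  have hexpS : Real.exp S - 1 ≤ S * Real.exp S := by
    have hx : Real.exp (-S) * Real.exp S = 1 := by
      rw [← Real.exp_add]; simp
    have h1S : -S + 1 ≤ Real.exp (-S) := Real.add_one_le_exp _
    have hmul := mul_le_mul_of_nonneg_right h1S (Real.exp_pos S).le
    linarith only [hx, hmul]
  have habs : |p m * (Nat.factorial m : ℝ) * (2/(h:ℝ)^2)^m * Real.exp ((h:ℝ)^2/2) - 1|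
      ≤ S * Real.exp S := by
    clear_value L Mr t b S
    rw [abs_le]
    constructor
    · have h1 : 1 - S ≤ 1 - (t + (m:ℝ)*b) := by linarith
      have h2 : S ≤ S * Real.exp S := by
        have := mul_le_mul_of_nonneg_left (Real.one_le_exp hS0) hS0
        linarith only [this]
      linarith only [h1, h2, hlo]
    · have h1 : Real.exp (t + (m:ℝ)*b) ≤ Real.exp S := Real.exp_le_exp.mpr hsS
      linarith only [h1, hhi, hexpS]
  refine le_trans habs ?_
  have hfin : S * Real.exp S ≤ (129 * C * ((h:ℝ)^4 + L^2) / n) * Real.exp (65 + 56*C) := by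
    apply mul_le_mul hS1 (Real.exp_le_exp.mpr hS2) (Real.exp_pos _).le
    positivity
  refine le_trans hfin (le_of_eq ?_)
  ring
end

section
/- Let G be a directed graph with vertex set {v_0, v_1, v_2, …} such that v_0 is the unique sink, and C : V(G) → ℝ_{≥0} with ∑_i C(v_i) = 1. Suppose each edge v_i v_j satisfies j - i ≥ -K for an integer K > 0, and there exist nonnegative reals x(v_i v_j) on edges and ρ > 0 with: ∑_{j : v_i v_j ∈ G} (ρ/i) x(v_i v_j) ≥ C(v_i) for all i ≥ 1, and ∑_{j : v_j v_i ∈ G} x(v_j v_i) ≤ C(v_i) for all i. Then for any integer m > max{ρ, K-1}, ∑_{i ≥ m} C(v_i) ≤ (1/(1 - ρ/m)) (eρ/m)^k, where k = ⌊(m + min{0, K - ρ - 1})/K⌋. -/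
open scoped ENNReal

lemma aux_pow_le (k : ℕ) : (k:ℝ)^k ≤ Real.exp 1 ^ k * k.factorial := by
  induction k with
  | zero => simp
  | succ k ih =>
    have he : (0:ℝ) < Real.exp 1 := Real.exp_pos 1
    have hstep : ((k:ℝ)+1)^k ≤ Real.exp 1 * (k:ℝ)^k := by
      rcases Nat.eq_zero_or_pos k with hk | hk
      · subst hk; simpa using Real.one_le_exp (le_refl 1 |>.trans (by norm_num))
      · have hk' : (0:ℝ) < k := by exact_mod_cast hk
        have h1 : (k:ℝ) + 1 ≤ k * Real.exp (1/k) := by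
          have h := Real.add_one_le_exp (1/(k:ℝ))
          have h2 := mul_le_mul_of_nonneg_left h hk'.le
          calc (k:ℝ) + 1 = k * (1/k + 1) := by field_simp; ring
          _ ≤ k * Real.exp (1/k) := h2
        calc ((k:ℝ)+1)^k ≤ ((k:ℝ) * Real.exp (1/k))^k :=
              pow_le_pow_left₀ (by positivity) h1 k
        _ = (k:ℝ)^k * Real.exp (1/k) ^ k := mul_pow _ _ _
        _ = (k:ℝ)^k * Real.exp (k * (1/k)) := by rw [← Real.exp_nat_mul]
        _ = Real.exp 1 * (k:ℝ)^k := by rw [mul_one_div, div_self (ne_of_gt hk'), mul_comm]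
    have hfac : (Nat.factorial (k+1) : ℝ) = (k+1) * k.factorial := by
      push_cast [Nat.factorial_succ]; ring
    calc ((k+1:ℕ):ℝ)^(k+1) = ((k:ℝ)+1)^k * ((k:ℝ)+1) := by push_cast; ring
    _ ≤ Real.exp 1 * (k:ℝ)^k * ((k:ℝ)+1) :=
        mul_le_mul_of_nonneg_right hstep (by positivity)
    _ ≤ Real.exp 1 * (Real.exp 1 ^ k * k.factorial) * ((k:ℝ)+1) :=
        mul_le_mul_of_nonneg_right
          (mul_le_mul_of_nonneg_left ih he.le) (by positivity)
    _ = Real.exp 1 ^ (k+1) * (Nat.factorial (k+1)) := by rw [hfac]; ring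

lemma aux_prod_succ (k : ℕ) : ∏ j ∈ Finset.range k, ((j:ℝ) + 1) = k.factorial := by
  induction k with
  | zero => simp
  | succ k ih =>
    rw [Finset.prod_range_succ, ih, Nat.factorial_succ]
    push_cast
    ring

lemma aux_prod_fall (k : ℕ) : ∏ u ∈ Finset.range k, ((k:ℝ) - u) = k.factorial := by
  rw [← Finset.prod_range_reflect (fun j => (k:ℝ) - j) k]
  rw [← aux_prod_succ k]
  apply Finset.prod_congr rfl
  intro j hj
  rw [Finset.mem_range] at hj
  have h : ((k - 1 - j : ℕ) : ℝ) = (k:ℝ) - 1 - j := by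
    have : (k:ℤ) - 1 - j = ((k - 1 - j : ℕ) : ℤ) := by omega
    exact_mod_cast this.symm
  rw [h]; ring

lemma aux_prod_lb (m K k : ℕ) (hK : 0 < K) (hkK : k * K ≤ m) :
    ((m:ℝ)/Real.exp 1)^k ≤ ∏ u ∈ Finset.range k, ((m:ℝ) - u*K) := by
  rcases Nat.eq_zero_or_pos k with hk | hk
  · subst hk; simp
  have hk' : (0:ℝ) < k := by exact_mod_cast hk
  have hm : 0 < m := lt_of_lt_of_le (Nat.mul_pos hk hK) hkK
  have hm' : (0:ℝ) < m := by exact_mod_cast hm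
  have hmk : (k:ℝ) * K ≤ m := by exact_mod_cast hkK
  have step : ∀ u ∈ Finset.range k, (m:ℝ)/k * ((k:ℝ) - u) ≤ (m:ℝ) - u*K := by
    intro u hu
    rw [Finset.mem_range] at hu
    have hu0 : (0:ℝ) ≤ u := Nat.cast_nonneg u
    have key : (u:ℝ) * ((k:ℝ)*K) ≤ (u:ℝ) * m := mul_le_mul_of_nonneg_left hmk hu0
    rw [div_mul_eq_mul_div, div_le_iff₀ hk']
    nlinarith
  have hnn : ∀ u ∈ Finset.range k, (0:ℝ) ≤ (m:ℝ)/k * ((k:ℝ) - u) := by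
    intro u hu
    rw [Finset.mem_range] at hu
    have h1 : (u:ℝ) ≤ k := by exact_mod_cast hu.le
    have h2 : (0:ℝ) ≤ (k:ℝ) - u := by linarith
    positivity
  have h1 : ∏ u ∈ Finset.range k, ((m:ℝ)/k * ((k:ℝ) - u))
      ≤ ∏ u ∈ Finset.range k, ((m:ℝ) - u*K) := Finset.prod_le_prod hnn step
  have h2 : ∏ u ∈ Finset.range k, ((m:ℝ)/k * ((k:ℝ) - u))
      = ((m:ℝ)/k)^k * k.factorial := by
    rw [Finset.prod_mul_distrib, Finset.prod_const, Finset.card_range, aux_prod_fall]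
  refine le_trans ?_ h1
  rw [h2]
  have hkk := aux_pow_le k
  have he : (0:ℝ) < Real.exp 1 := Real.exp_pos 1
  rw [div_pow, div_pow, div_mul_eq_mul_div, div_le_div_iff₀ (by positivity) (by positivity)]
  calc (m:ℝ)^k * (k:ℝ)^k ≤ (m:ℝ)^k * (Real.exp 1 ^ k * k.factorial) :=
        mul_le_mul_of_nonneg_left hkk (by positivity)
  _ = (m:ℝ)^k * (k.factorial:ℝ) * Real.exp 1 ^ k := by ring

lemma aux_ofReal_tsum_le {f : ℕ → ℝ} (hf : ∀ n, 0 ≤ f n) :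
    ENNReal.ofReal (∑' n, f n) ≤ ∑' n, ENNReal.ofReal (f n) := by
  by_cases hs : Summable f
  · rw [ENNReal.ofReal_tsum_of_nonneg hf hs]
  · rw [tsum_eq_zero_of_not_summable hs]; simp

theorem stmt19 (E : ℕ → ℕ → Prop) (C : ℕ → ℝ) (hC0 : ∀ i, 0 ≤ C i)
    (hC1 : HasSum C 1)
    (hsink0 : ∀ j, ¬ E 0 j) (hsinkuniq : ∀ i, (∀ j, ¬ E i j) → i = 0)
    (K : ℕ) (hK : 0 < K)
    (hdrop : ∀ i j, E i j → (j : ℤ) - i ≥ -(K : ℤ))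
    (x : ℕ → ℕ → ℝ) (hx : ∀ i j, 0 ≤ x i j)
    (ρ : ℝ) (hρ : 0 < ρ)
    (hfwd : ∀ i : ℕ, 1 ≤ i →
      C i ≤ ∑' j : ℕ, Set.indicator {j | E i j} (fun j => ρ / i * x i j) j)
    (hbwd : ∀ i : ℕ, ∑' j : ℕ, Set.indicator {j | E j i} (fun j => x j i) j ≤ C i)
    (m : ℕ) (hm1 : ρ < m) (hm2 : (K : ℝ) - 1 < m) :
    ∑' i : ℕ, Set.indicator {i | m ≤ i} C i
      ≤ 1 / (1 - ρ / m)
          * (Real.exp 1 * ρ / m) ^ ⌊((m : ℝ) + min 0 ((K : ℝ) - ρ - 1)) / K⌋ := by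
  classical
  set r : ℝ≥0∞ := ENNReal.ofReal ρ with hr
  set c : ℕ → ℝ≥0∞ := fun i => ENNReal.ofReal (C i) with hc
  set ξ : ℕ → ℕ → ℝ≥0∞ := fun i j => if E i j then ENNReal.ofReal (x i j) else 0 with hξ
  set N : ℕ → ℝ≥0∞ := fun t => ∑' i, if t ≤ i then c i else 0 with hN
  have hCsum : Summable C := hC1.summable
  have hm0' : (0:ℝ) < m := lt_trans hρ hm1
  have hm0 : 0 < m := by exact_mod_cast hm0'
  have htot : ∑' i, c i = 1 := by
    have h := ENNReal.ofReal_tsum_of_nonneg hC0 hCsum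
    rw [hC1.tsum_eq] at h
    simpa [hc] using h.symm
  have hNle1 : ∀ t, N t ≤ 1 := by
    intro t
    rw [← htot]
    exact ENNReal.tsum_le_tsum (fun i => by split <;> simp)
  -- Step B
  have stepB : ∀ i : ℕ, 1 ≤ i → (i : ℝ≥0∞) * c i ≤ r * ∑' j, ξ i j := by
    intro i hi
    have hi' : (0:ℝ) < i := by exact_mod_cast hi
    have hfnn : ∀ j, 0 ≤ Set.indicator {j | E i j} (fun j => ρ / i * x i j) j := by
      intro j
      exact Set.indicator_nonneg
        (fun j _ => mul_nonneg (div_nonneg hρ.le (Nat.cast_nonneg i)) (hx i j)) j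
    have h1 : c i ≤ ENNReal.ofReal (ρ/i) * ∑' j, ξ i j := by
      calc c i ≤ ENNReal.ofReal (∑' j, Set.indicator {j | E i j} (fun j => ρ / i * x i j) j) :=
            ENNReal.ofReal_le_ofReal (hfwd i hi)
      _ ≤ ∑' j, ENNReal.ofReal (Set.indicator {j | E i j} (fun j => ρ / i * x i j) j) :=
            aux_ofReal_tsum_le hfnn
      _ = ∑' j, ENNReal.ofReal (ρ/i) * ξ i j := by
            refine tsum_congr fun j => ?_
            by_cases hj : E i j
            · simp [hξ, Set.indicator_apply, Set.mem_setOf_eq, hj,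
                ENNReal.ofReal_mul (div_nonneg hρ.le (Nat.cast_nonneg i))]
            · simp [hξ, Set.indicator_apply, Set.mem_setOf_eq, hj]
      _ = ENNReal.ofReal (ρ/i) * ∑' j, ξ i j := ENNReal.tsum_mul_left
    calc (i : ℝ≥0∞) * c i ≤ (i : ℝ≥0∞) * (ENNReal.ofReal (ρ/i) * ∑' j, ξ i j) :=
          mul_le_mul_right h1 _
    _ = ((i : ℝ≥0∞) * ENNReal.ofReal (ρ/i))  * ∑' j, ξ i j := by ring
    _ = r * ∑' j, ξ i j := by
          congr 1
          rw [← ENNReal.ofReal_natCast i, ← ENNReal.ofReal_mul (by positivity)]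
          congr 1
          field_simp
  -- Step C
  have stepC : ∀ i : ℕ, (∑' j, ξ j i) ≤ c i := by
    intro i
    have hsupp : ∀ j ∉ Finset.range (i + K + 1), ξ j i = 0 := by
      intro j hj
      rw [Finset.mem_range, not_lt] at hj
      by_cases hE : E j i
      · exfalso
        have := hdrop j i hE
        omega
      · simp [hξ, hE]
    have hsupp' : ∀ j ∉ Finset.range (i + K + 1),
        Set.indicator {j | E j i} (fun j => x j i) j = 0 := by
      intro j hj
      rw [Finset.mem_range, not_lt] at hj
      by_cases hE : E j i
      · exfalso
        have := hdrop j i hE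
        omega
      · simp [Set.indicator_apply, Set.mem_setOf_eq, hE]
    rw [tsum_eq_sum (L := SummationFilter.unconditional ℕ) hsupp]
    have key : ∑ j ∈ Finset.range (i + K + 1), ξ j i
        = ENNReal.ofReal (∑ j ∈ Finset.range (i + K + 1),
            Set.indicator {j | E j i} (fun j => x j i) j) := by
      rw [ENNReal.ofReal_sum_of_nonneg]
      · refine Finset.sum_congr rfl fun j _ => ?_
        by_cases hE : E j i
        · simp [hξ, Set.indicator_apply, Set.mem_setOf_eq, hE]
        · simp [hξ, Set.indicator_apply, Set.mem_setOf_eq, hE]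
      · intro j _
        exact Set.indicator_nonneg (fun j _ => hx j i) j
    rw [key]
    apply ENNReal.ofReal_le_ofReal
    rw [← tsum_eq_sum (L := SummationFilter.unconditional ℕ) hsupp']
    exact hbwd i
  -- Step D
  have stepD : ∀ t : ℕ, 1 ≤ t → (t : ℝ≥0∞) * N t ≤ r * N (t - K) := by
    intro t ht
    calc (t : ℝ≥0∞) * N t = ∑' i, ((t : ℝ≥0∞) * if t ≤ i then c i else 0) :=
          ENNReal.tsum_mul_left.symm
    _ ≤ ∑' i, (if t ≤ i then r * ∑' j, ξ i j else 0) := by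
        refine ENNReal.tsum_le_tsum fun i => ?_
        by_cases hti : t ≤ i
        · simp only [hti, if_true]
          calc (t : ℝ≥0∞) * c i ≤ (i : ℝ≥0∞) * c i :=
                mul_le_mul_left (by exact_mod_cast hti) _
          _ ≤ r * ∑' j, ξ i j := stepB i (le_trans ht hti)
        · simp [hti]
    _ = r * ∑' i, ∑' j, (if t ≤ i then ξ i j else 0) := by
        rw [← ENNReal.tsum_mul_left]
        refine tsum_congr fun i => ?_
        by_cases hti : t ≤ i
        · simp [hti, ENNReal.tsum_mul_left]
        · simp [hti]
    _ = r * ∑' j, ∑' i, (if t ≤ i then ξ i j else 0) := by rw [ENNReal.tsum_comm]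
    _ ≤ r * N (t - K) := by
        apply mul_le_mul_right
        refine ENNReal.tsum_le_tsum fun j => ?_
        by_cases hj : t - K ≤ j
        · simp only [hj, if_true]
          refine le_trans ?_ (stepC j)
          refine ENNReal.tsum_le_tsum fun i => ?_
          split <;> simp
        · have hz : ∀ i : ℕ, (if t ≤ i then ξ i j else 0) = 0 := by
            intro i
            by_cases hti : t ≤ i
            · simp only [hti, if_true]
              by_cases hE : E i j
              · exfalso
                have := hdrop i j hE
                omega
              · simp [hξ, hE]
            · simp [hti]
          simp [hz, hj]
  -- the exponent
  have hK' : (0:ℝ) < K := by exact_mod_cast hK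
  have hδ : 0 ≤ (m:ℝ) + min 0 ((K:ℝ) - ρ - 1) := by
    have hK1 : (1:ℝ) ≤ K := by exact_mod_cast hK
    rcases le_or_gt 0 ((K:ℝ) - ρ - 1) with h | h
    · rw [min_eq_left h]; linarith
    · rw [min_eq_right h.le]; linarith
  have hfl : 0 ≤ ⌊((m:ℝ) + min 0 ((K:ℝ) - ρ - 1)) / K⌋ :=
    Int.floor_nonneg.mpr (div_nonneg hδ hK'.le)
  set k : ℕ := (⌊((m:ℝ) + min 0 ((K:ℝ) - ρ - 1)) / K⌋).toNat with hkdef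
  have hkZ : ((k:ℤ)) = ⌊((m:ℝ) + min 0 ((K:ℝ) - ρ - 1)) / K⌋ := Int.toNat_of_nonneg hfl
  have hkK : k * K ≤ m := by
    have h1 : ((k:ℤ):ℝ) ≤ ((m:ℝ) + min 0 ((K:ℝ) - ρ - 1)) / K := by
      rw [hkZ]; exact Int.floor_le _
    have h2 : (k:ℝ) * K ≤ (m:ℝ) + min 0 ((K:ℝ) - ρ - 1) := by
      rw [← le_div_iff₀ hK']
      exact_mod_cast h1
    have h3 : (k:ℝ) * K ≤ m := le_trans h2 (by have := min_le_left (0:ℝ) ((K:ℝ)-ρ-1); linarith)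
    exact_mod_cast h3
  -- Step E : iterate
  have stepE : ∀ s, s ≤ k →
      (∏ u ∈ Finset.range s, ((m - u*K : ℕ) : ℝ≥0∞)) * N m ≤ r^s * N (m - s*K) := by
    intro s
    induction s with
    | zero => intro _; simp
    | succ s ih =>
      intro hs
      have hs' : s ≤ k := Nat.le_of_succ_le hs
      have hsm : (s+1)*K ≤ m := le_trans (Nat.mul_le_mul_right K hs) hkK
      have hsm' : s*K + K ≤ m := by rwa [Nat.succ_mul] at hsm
      have h1 : K ≤ m - s*K := Nat.le_sub_of_add_le (by omega)
      have h1' : 1 ≤ m - s*K := le_trans hK h1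
      have h2 : m - s*K - K = m - (s+1)*K := by rw [Nat.sub_sub, Nat.succ_mul]
      calc (∏ u ∈ Finset.range (s+1), ((m - u*K : ℕ) : ℝ≥0∞)) * N m
          = ((m - s*K : ℕ) : ℝ≥0∞) * ((∏ u ∈ Finset.range s, ((m - u*K : ℕ) : ℝ≥0∞)) * N m) := by
            rw [Finset.prod_range_succ]; ring
      _ ≤ ((m - s*K : ℕ) : ℝ≥0∞) * (r^s * N (m - s*K)) := mul_le_mul_right (ih hs') _
      _ = r^s * (((m - s*K : ℕ) : ℝ≥0∞) * N (m - s*K)) := by ring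
      _ ≤ r^s * (r * N (m - s*K - K)) := mul_le_mul_right (stepD _ h1') _
      _ = r^(s+1) * N (m - (s+1)*K) := by rw [h2]; ring
  have hPN : (∏ u ∈ Finset.range k, ((m - u*K : ℕ) : ℝ≥0∞)) * N m ≤ r^k := by
    refine le_trans (stepE k le_rfl) ?_
    calc r^k * N (m - k*K) ≤ r^k * 1 := mul_le_mul_right (hNle1 _) _
    _ = r^k := mul_one _
  -- convert to ℝ
  have hind : ∀ i, 0 ≤ Set.indicator {i | m ≤ i} C i :=
    fun i => Set.indicator_nonneg (fun i _ => hC0 i) i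
  have hLnn : 0 ≤ ∑' i, Set.indicator {i | m ≤ i} C i := tsum_nonneg hind
  have hNm : N m = ENNReal.ofReal (∑' i, Set.indicator {i | m ≤ i} C i) := by
    rw [ENNReal.ofReal_tsum_of_nonneg hind (hCsum.indicator _)]
    refine tsum_congr fun i => ?_
    by_cases him : m ≤ i <;>
      simp [Set.indicator_apply, Set.mem_setOf_eq, him, hc]
  have hreal := ENNReal.toReal_mono (by
      exact ENNReal.pow_ne_top ENNReal.ofReal_ne_top) hPN
  rw [ENNReal.toReal_mul, ENNReal.toReal_pow, hr, ENNReal.toReal_ofReal hρ.le] at hreal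
  have hP : (∏ u ∈ Finset.range k, ((m - u*K : ℕ) : ℝ≥0∞)).toReal
      = ∏ u ∈ Finset.range k, ((m:ℝ) - u*K) := by
    rw [ENNReal.toReal_prod]
    refine Finset.prod_congr rfl fun u hu => ?_
    rw [Finset.mem_range] at hu
    have huK : u*K ≤ m := le_trans (Nat.mul_le_mul_right K hu.le) hkK
    rw [ENNReal.toReal_natCast]
    push_cast [Nat.cast_sub huK]
    ring
  rw [hP, hNm, ENNReal.toReal_ofReal hLnn] at hreal
  -- hreal : (∏ (m - uK)) * L ≤ ρ^k
  set L := ∑' i, Set.indicator {i | m ≤ i} C i with hL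
  have hPr_lb : ((m:ℝ)/Real.exp 1)^k ≤ ∏ u ∈ Finset.range k, ((m:ℝ) - u*K) :=
    aux_prod_lb m K k hK hkK
  have hme : (0:ℝ) < (m:ℝ)/Real.exp 1 := by positivity
  have hPr_pos : 0 < ∏ u ∈ Finset.range k, ((m:ℝ) - u*K) :=
    lt_of_lt_of_le (pow_pos hme k) hPr_lb
  have hL1 : L ≤ ρ^k / ∏ u ∈ Finset.range k, ((m:ℝ) - u*K) := by
    rw [le_div_iff₀ hPr_pos]
    linarith [hreal]
  have hL2 : ρ^k / ∏ u ∈ Finset.range k, ((m:ℝ) - u*K) ≤ ρ^k / ((m:ℝ)/Real.exp 1)^k :=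
    div_le_div_of_nonneg_left (by positivity) (pow_pos hme k) hPr_lb
  have hL3 : ρ^k / ((m:ℝ)/Real.exp 1)^k = (Real.exp 1 * ρ / m)^k := by
    rw [← div_pow]
    congr 1
    field_simp
  have hfrac : 0 < 1 - ρ/(m:ℝ) := by
    have : ρ/(m:ℝ) < 1 := (div_lt_one hm0').mpr hm1
    linarith
  have hone : 1 ≤ 1/(1 - ρ/(m:ℝ)) := by
    have hdn : (0:ℝ) ≤ ρ/(m:ℝ) := by positivity
    rw [le_div_iff₀ hfrac]
    linarith
  have hbase : (0:ℝ) ≤ Real.exp 1 * ρ / m := by positivity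
  have hfinal : L ≤ 1/(1 - ρ/(m:ℝ)) * (Real.exp 1 * ρ / m)^k := by
    calc L ≤ ρ^k / ∏ u ∈ Finset.range k, ((m:ℝ) - u*K) := hL1
    _ ≤ (Real.exp 1 * ρ / m)^k := by rw [← hL3]; exact hL2
    _ ≤ 1/(1 - ρ/(m:ℝ)) * (Real.exp 1 * ρ / m)^k :=
        le_mul_of_one_le_left (pow_nonneg hbase k) hone
  calc L ≤ 1/(1 - ρ/(m:ℝ)) * (Real.exp 1 * ρ / m)^k := hfinal
  _ = 1/(1 - ρ/(m:ℝ)) * (Real.exp 1 * ρ / m)^(⌊((m:ℝ) + min 0 ((K:ℝ) - ρ - 1)) / K⌋) := by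
      rw [← hkZ, zpow_natCast]
end
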